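/- Let V : ℕ → ℤ[T,T⁻¹] satisfy the Jones recurrence V(m+2) = (T³ − T)·V(m+1) + T⁴·V(m) for all m. Suppose V(0) ≠ 0, the pair (V(0), V(1)) is critical (deg V(1) = 1 + deg V(0)), the sum of the leading coefficients of V(0) and V(1) is 0, and deg V(2) ≤ deg V(1). Then for every m ≥ 2 the pair (V(m), V(m+1)) is stable, and for every m ≥ 3, deg V(m) = deg V(1) + 3·m − 5. -/

import Mathlib

/-- The degree of a Laurent polynomial `f`, viewed as a finitely supported function
`ℤ → ℤ`: the maximum of its support in `WithBot ℤ` (so `jdeg 0 = ⊥`). -/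
noncomputable def jdeg (f : LaurentPolynomial ℤ) : WithBot ℤ :=
  f.coeff.support.max

/-- The leading coefficient of a Laurent polynomial: its coefficient at `jdeg f`
(for `f ≠ 0`; by convention `jcoeff 0 = 0`). -/
noncomputable def jcoeff (f : LaurentPolynomial ℤ) : ℤ :=
  f.coeff (WithBot.unbotD 0 (f.coeff.support.max))

/-!
Multiplication by `T ^ 3 - T` raises the degree by exactly 3, and multiplication by `T ^ 4` by
exactly 4. So in `V (m + 2) = (T ^ 3 - T) * V (m + 1) + T ^ 4 * V m` one summand strictly
dominates unless the pair `(V m, V (m + 1))` is critical: for a stable pair the first summand wins,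
`deg V (m + 2) = 3 + deg V (m + 1)` and the next pair is stable again; if instead
`deg V (m + 1) < 1 + deg V m`, the second summand wins, `deg V (m + 2) = 4 + deg V m`, and the
next pair is stable. The degree drop `deg V 2 ≤ deg V 1` puts `(V 1, V 2)` in the second case,
so `deg V 3 = deg V 1 + 4`, and from then on stability propagates, adding 3 to the degree at
each step.
-/

namespace LaurentPolynomial

variable {R : Type*}

section Semiring

variable [Semiring R] {f g : R[T;T⁻¹]}

theorem degree_add_eq_left_of_degree_lt (h : g.degree < f.degree) :
    (f + g).degree = f.degree :=
  AddMonoidAlgebra.supDegree_add_eq_left h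

theorem degree_add_eq_right_of_degree_lt (h : f.degree < g.degree) :
    (f + g).degree = g.degree :=
  AddMonoidAlgebra.supDegree_add_eq_right h

theorem degree_mul_le (f g : R[T;T⁻¹]) : (f * g).degree ≤ f.degree + g.degree :=
  AddMonoidAlgebra.supDegree_mul_le fun _ _ => WithBot.coe_add ..

theorem degree_T_mul_le (n : ℤ) (f : R[T;T⁻¹]) : (T n * f).degree ≤ n + f.degree :=
  (degree_mul_le _ _).trans (by gcongr; exact degree_T_le n)

theorem degree_T_mul (n : ℤ) (f : R[T;T⁻¹]) : (T n * f).degree = n + f.degree := by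
  refine (degree_T_mul_le n f).antisymm ?_
  have h := degree_T_mul_le (-n) (T n * f)
  rw [← mul_assoc, ← T_add, neg_add_cancel, T_zero, one_mul] at h
  have h' : (n : WithBot ℤ) + f.degree ≤ n + (↑(-n) + (T n * f).degree) := by gcongr
  rwa [← add_assoc, ← WithBot.coe_add, add_neg_cancel, WithBot.coe_zero, zero_add] at h'

def IsStable (f g : R[T;T⁻¹]) : Prop :=
  1 + f.degree < g.degree

end Semiring

section Ring

variable [Ring R]

theorem degree_neg (f : R[T;T⁻¹]) : (-f).degree = f.degree :=
  AddMonoidAlgebra.supDegree_neg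

theorem degree_T_sub_T_mul {m n : ℤ} (hnm : n < m) (f : R[T;T⁻¹]) :
    ((T m - T n) * f).degree = m + f.degree := by
  rcases eq_or_ne f.degree ⊥ with hf | hf
  · simp [degree_eq_bot_iff.1 hf]
  rw [sub_mul, sub_eq_add_neg, ← mul_neg, degree_add_eq_left_of_degree_lt, degree_T_mul]
  rw [degree_T_mul, degree_T_mul, degree_neg]
  exact WithBot.add_lt_add_right hf (WithBot.coe_lt_coe.2 hnm)

theorem degree_T_three_sub_T_one_mul (f : R[T;T⁻¹]) :
    ((T 3 - T 1) * f).degree = 3 + f.degree :=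
  degree_T_sub_T_mul (by norm_num) f

-- `T 4` contributes `3 + 1`, the shape in which it is compared with `T 3 - T 1` below.
theorem degree_T_four_mul (f : R[T;T⁻¹]) : (T 4 * f).degree = 3 + (1 + f.degree) := by
  rw [degree_T_mul, ← add_assoc]
  norm_num

def JonesRecurrence (V : ℕ → R[T;T⁻¹]) : Prop :=
  ∀ m, V (m + 2) = (T 3 - T 1) * V (m + 1) + T 4 * V m

namespace JonesRecurrence

variable {V : ℕ → R[T;T⁻¹]} {m : ℕ}

theorem degree_add_two_of_isStable (hV : JonesRecurrence V) (h : IsStable (V m) (V (m + 1))) :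
    (V (m + 2)).degree = 3 + (V (m + 1)).degree := by
  rw [hV m, degree_add_eq_left_of_degree_lt] <;>
    rw [degree_T_three_sub_T_one_mul]
  rw [degree_T_four_mul]
  exact WithBot.add_lt_add_left (by simp) h

theorem isStable_succ (hV : JonesRecurrence V) (h : IsStable (V m) (V (m + 1))) :
    IsStable (V (m + 1)) (V (m + 2)) := by
  rw [IsStable, hV.degree_add_two_of_isStable h]
  exact WithBot.add_lt_add_right (ne_bot_of_gt h) (by norm_num)

theorem degree_add_two_of_degree_lt (hV : JonesRecurrence V)
    (h : (V (m + 1)).degree < 1 + (V m).degree) :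
    (V (m + 2)).degree = 3 + (1 + (V m).degree) := by
  rw [hV m, degree_add_eq_right_of_degree_lt] <;>
    rw [degree_T_four_mul]
  rw [degree_T_three_sub_T_one_mul]
  exact WithBot.add_lt_add_left (by simp) h

theorem isStable_succ_of_degree_lt (hV : JonesRecurrence V)
    (h : (V (m + 1)).degree < 1 + (V m).degree) :
    IsStable (V (m + 1)) (V (m + 2)) := by
  rw [IsStable, hV.degree_add_two_of_degree_lt h]
  exact (WithBot.add_lt_add_left (by simp) h).trans_le (by gcongr; norm_num)

end JonesRecurrence

end Ring

end LaurentPolynomial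

theorem jdeg_eq_degree (f : LaurentPolynomial ℤ) : jdeg f = f.degree := rfl

open LaurentPolynomial in
theorem jones_critical_case_two_b_general (V : ℕ → LaurentPolynomial ℤ)
    (hV : ∀ m : ℕ, V (m + 2) = (T 3 - T 1) * V (m + 1) + T 4 * V m)
    (h0 : V 0 ≠ 0)
    (hcrit : jdeg (V 1) = 1 + jdeg (V 0))
    (h2 : jdeg (V 2) ≤ jdeg (V 1)) :
    (∀ m : ℕ, 2 ≤ m → 1 + jdeg (V m) < jdeg (V (m + 1))) ∧
    (∀ m : ℕ, 3 ≤ m → jdeg (V m) = jdeg (V 1) + ((3 * (m : ℤ) - 5 : ℤ) : WithBot ℤ)) := by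
  simp only [jdeg_eq_degree] at hcrit h2 ⊢
  have hJ : JonesRecurrence V := hV
  have h1 : (V 1).degree ≠ ⊥ := by
    rw [hcrit]
    exact WithBot.add_ne_bot.2 ⟨by simp, mt degree_eq_bot_iff.1 h0⟩
  have hdrop : (V 2).degree < 1 + (V 1).degree :=
    h2.trans_lt (by simpa using WithBot.add_lt_add_right h1 zero_lt_one)
  have hstable (m : ℕ) (hm : 2 ≤ m) : IsStable (V m) (V (m + 1)) := by
    induction m, hm using Nat.le_induction with
    | base => exact hJ.isStable_succ_of_degree_lt hdrop
    | succ m _ ih => exact hJ.isStable_succ ih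
  refine ⟨hstable, fun m hm => ?_⟩
  induction m, hm using Nat.le_induction with
  | base => rw [hJ.degree_add_two_of_degree_lt hdrop, ← add_assoc, add_comm]; norm_num
  | succ m hm ih =>
    obtain ⟨n, rfl⟩ : ∃ n, m = n + 1 := ⟨m - 1, by omega⟩
    rw [hJ.degree_add_two_of_isStable (hstable n (by omega)), ih,
      show 3 * ((n + 1 + 1 : ℕ) : ℤ) - 5 = 3 + (3 * ((n + 1 : ℕ) : ℤ) - 5) by push_cast; ring,
      WithBot.coe_add, add_left_comm]
    rfl

open LaurentPolynomial in
/-- **Proposition 3.4, Case 2b** (critical case, vanishing coefficient sum, degree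
drop). If `V` satisfies the Jones recurrence, `V 0 ≠ 0`, the pair `(V 0, V 1)` is
critical, the sum of the leading coefficients of `V 0` and `V 1` is `0`, and
`deg V 2 ≤ deg V 1`, then every pair `(V m, V (m+1))` with `m ≥ 2` is stable and
`deg V m = deg V 1 + 3m − 5` for `m ≥ 3`. -/
theorem jones_critical_case_two_b (V : ℕ → LaurentPolynomial ℤ)
    (hV : ∀ m : ℕ, V (m + 2) = (T 3 - T 1) * V (m + 1) + T 4 * V m)
    (h0 : V 0 ≠ 0)
    (hcrit : jdeg (V 1) = 1 + jdeg (V 0))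
    (hC : jcoeff (V 0) + jcoeff (V 1) = 0)
    (h2 : jdeg (V 2) ≤ jdeg (V 1)) :
    (∀ m : ℕ, 2 ≤ m → 1 + jdeg (V m) < jdeg (V (m + 1))) ∧
    (∀ m : ℕ, 3 ≤ m → jdeg (V m) = jdeg (V 1) + ((3 * (m : ℤ) - 5 : ℤ) : WithBot ℤ)) :=
  jones_critical_case_two_b_general V hV h0 hcrit h2
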